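/- (Key step (9.12) in the proof of Theorem 3.1, type 3 tails) Under the two-distribution tail-equivalence setup with ξ < 0, for every m ∈ (0,1) ∪ (1,∞): (F₂⁻¹(τ) − F₁⁻¹(τ)) / (F₁⁻¹(mτ) − F₁⁻¹(τ)) → (K^ξ − 1)/(m^{−ξ} − 1) as τ ↘ 0, and F₁⁻¹(mτ) − F₁⁻¹(τ) ≠ 0 for all sufficiently small τ > 0. -/

import Mathlib

/-!
Write `Q_F(τ) = sInf {z | τ < F z}`. If `G (c z) / F z → (c / ℓ) ^ α` (`α > 0`) for every `c > 0`,
then for `c > ℓ` eventually `F < G (c ·)` near `0⁺`, so `c Q_F(τ)` lies in the set defining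
`Q_G(τ)`; for `c < ℓ` the reverse comparison keeps that set above `c Q_F(τ)`. Hence
`Q_G / Q_F → ℓ`. Regular variation of `F₁` together with tail equivalence gives this for
`G = F₂`, `ℓ = K ^ ξ`, and for `G = F₁ / m`, whose quantile is `Q_{F₁}(m τ)`, `ℓ = m ^ (-ξ)`.
Dividing numerator and denominator by `Q_{F₁}(τ)` gives the limit `(K ^ ξ - 1) / (m ^ (-ξ) - 1)`.
-/

open MeasureTheory Filter Topology Real Set

lemma tendsto_div_of_forall_eventually_mul_le {ι : Type*} {l : Filter ι} {f g : ι → ℝ} {ℓ : ℝ}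
    (hℓ : 0 < ℓ) (hf : ∀ᶠ x in l, 0 < f x)
    (hlow : ∀ c, 0 < c → c < ℓ → ∀ᶠ x in l, c * f x ≤ g x)
    (hup : ∀ c, ℓ < c → ∀ᶠ x in l, g x ≤ c * f x) :
    Tendsto (fun x => g x / f x) l (𝓝 ℓ) := by
  refine tendsto_order.2 ⟨fun a ha => ?_, fun b hb => ?_⟩
  · obtain ⟨c, hac, hcℓ⟩ := exists_between (max_lt ha hℓ)
    filter_upwards [hlow c ((le_max_right a 0).trans_lt hac) hcℓ, hf] with x hle hfx
    exact (le_max_left a 0).trans_lt (hac.trans_le ((le_div_iff₀ hfx).2 hle))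
  · obtain ⟨c, hℓc, hcb⟩ := exists_between hb
    filter_upwards [hup c hℓc, hf] with x hle hfx
    exact ((div_le_iff₀ hfx).2 hle).trans_lt hcb

lemma tendsto_sub_div_sub_of_tendsto_div {ι : Type*} {l : Filter ι} {f g h : ι → ℝ} {A B : ℝ}
    (hf : ∀ᶠ x in l, f x ≠ 0) (hg : Tendsto (fun x => g x / f x) l (𝓝 A))
    (hh : Tendsto (fun x => h x / f x) l (𝓝 B)) (hB : B ≠ 1) :
    Tendsto (fun x => (g x - f x) / (h x - f x)) l (𝓝 ((A - 1) / (B - 1))) ∧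
      ∀ᶠ x in l, h x - f x ≠ 0 := by
  have hden : ∀ᶠ x in l, h x / f x - 1 ≠ 0 :=
    (hh.sub_const 1).eventually_ne (sub_ne_zero.2 hB)
  have hne : ∀ᶠ x in l, h x - f x ≠ 0 := by
    filter_upwards [hf, hden] with x hfx hx
    rwa [div_sub_one hfx, div_ne_zero_iff, and_iff_left hfx] at hx
  refine ⟨((hg.sub_const 1).div (hh.sub_const 1) (sub_ne_zero.2 hB)).congr' ?_, hne⟩
  filter_upwards [hf] with x hfx
  rw [Pi.div_apply, div_sub_one hfx, div_sub_one hfx, div_div_div_cancel_right₀ hfx]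

lemma tendsto_const_mul_nhdsGT_zero {v : ℝ} (hv : 0 < v) :
    Tendsto (v * ·) (𝓝[>] 0) (𝓝[>] 0) :=
  tendsto_comap.mono_left (comap_mulLeft_nhdsGT_zero hv).ge

lemma mul_rpow_neg_one_div {L c ξ : ℝ} (hL : 0 < L) (hc : 0 ≤ c) (hξ : ξ ≠ 0) :
    L * c ^ (-1 / ξ) = (c / L ^ ξ) ^ (-1 / ξ) := by
  have hexp : ξ * (-1 / ξ) = -1 := by field_simp
  rw [div_rpow hc (rpow_nonneg hL.le ξ), ← rpow_mul hL.le, hexp, rpow_neg_one, div_inv_eq_mul,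
    mul_comm]

lemma tendsto_nhdsGT_zero_of_tendsto_div {F : ℝ → ℝ} (hmono : Monotone F)
    (hF : ∀ z > 0, 0 ≤ F z) {v a : ℝ} (hv : 0 < v) (ha : a ≠ 1)
    (hlim : Tendsto (fun z => F (v * z) / F z) (𝓝[>] 0) (𝓝 a)) :
    Tendsto F (𝓝[>] 0) (𝓝 0) := by
  set b := sInf (F '' Ioi 0)
  have hb : Tendsto F (𝓝[>] 0) (𝓝 b) := hmono.tendsto_nhdsGT 0
  have hb0 : 0 ≤ b := le_csInf (nonempty_Ioi.image F) (by rintro _ ⟨z, hz, rfl⟩; exact hF z hz)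
  obtain hb0 | hb0 := hb0.eq_or_lt
  · rwa [← hb0] at hb
  -- a positive limit `b` would force the ratio to tend to `b / b = 1`
  have h1 := (hb.comp (tendsto_const_mul_nhdsGT_zero hv)).div hb hb0.ne'
  rw [div_self hb0.ne'] at h1
  exact absurd (tendsto_nhds_unique hlim h1) ha

lemma Monotone.nonpos_of_tendsto_nhdsGT_zero {F : ℝ → ℝ} (hmono : Monotone F)
    (hlim : Tendsto F (𝓝[>] 0) (𝓝 0)) (z : ℝ) (hz : z ≤ 0) : F z ≤ 0 :=
  _root_.ge_of_tendsto hlim <|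
    eventually_nhdsWithin_of_forall fun _ hw => hmono (hz.trans (le_of_lt hw))

/-- The generalized inverse `F⁻¹(τ)`. -/
noncomputable def quantile (F : ℝ → ℝ) (τ : ℝ) : ℝ := sInf {z | τ < F z}

section Quantile

variable {F G : ℝ → ℝ} {τ z : ℝ}

lemma bddBelow_setOf_lt_apply (hF : ∀ z ≤ 0, F z ≤ 0) (hτ : 0 ≤ τ) :
    BddBelow {z | τ < F z} :=
  ⟨0, fun z hz => le_of_not_gt fun h => (hτ.trans_lt hz).not_ge (hF z h.le)⟩

lemma apply_le_of_lt_quantile (hbdd : BddBelow {z | τ < F z}) (h : z < quantile F τ) :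
    F z ≤ τ :=
  le_of_not_gt fun h' => (csInf_le hbdd h').not_gt h

lemma le_apply_quantile (hmono : Monotone F)
    (hrc : ContinuousWithinAt F (Ici (quantile F τ)) (quantile F τ))
    (hbdd : BddBelow {z | τ < F z}) (hne : {z | τ < F z}.Nonempty) :
    τ ≤ F (quantile F τ) := by
  refine ge_of_tendsto (hrc.mono Ioi_subset_Ici_self) (eventually_nhdsWithin_of_forall ?_)
  intro z hz
  obtain ⟨s, hs, hsz⟩ := (csInf_lt_iff hbdd hne).1 hz
  exact hs.le.trans (hmono hsz.le)

variable (hmono : Monotone F) (hrc : ∀ z, ContinuousWithinAt F (Ici z) z)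
  (hF0 : ∀ z ≤ 0, F z ≤ 0) (hFpos : ∀ z > 0, 0 < F z)
include hmono hrc hF0 hFpos

lemma eventually_le_apply_quantile : ∀ᶠ τ in 𝓝[>] 0, τ ≤ F (quantile F τ) := by
  filter_upwards [Ioo_mem_nhdsGT (hFpos 1 one_pos)] with τ hτ
  exact le_apply_quantile hmono (hrc _) (bddBelow_setOf_lt_apply hF0 hτ.1.le) ⟨1, hτ.2⟩

lemma tendsto_quantile_nhdsGT_zero : Tendsto (quantile F) (𝓝[>] 0) (𝓝[>] 0) := by
  have hpos : ∀ᶠ τ in 𝓝[>] 0, 0 < quantile F τ := by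
    filter_upwards [self_mem_nhdsWithin, eventually_le_apply_quantile hmono hrc hF0 hFpos]
      with τ hτ hle
    -- a nonpositive quantile would force `τ ≤ F (quantile F τ) ≤ 0`
    exact lt_of_not_ge fun h => (hle.trans (hF0 _ h)).not_gt hτ
  refine tendsto_nhdsWithin_iff.2 ⟨tendsto_order.2 ⟨fun a ha => ?_, fun b hb => ?_⟩, hpos⟩
  · exact hpos.mono fun τ hτ => ha.trans hτ
  · obtain ⟨w, hw0, hwb⟩ := exists_between hb
    filter_upwards [Ioo_mem_nhdsGT (hFpos w hw0)] with τ hτ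
    exact (csInf_le (bddBelow_setOf_lt_apply hF0 hτ.1.le) hτ.2).trans_lt hwb

variable {α ℓ : ℝ} (hα : 0 < α) (hℓ : 0 < ℓ)
  (hG0 : ∀ z ≤ 0, G z ≤ 0)
  (hratio : ∀ c > 0, Tendsto (fun z => G (c * z) / F z) (𝓝[>] 0) (𝓝 ((c / ℓ) ^ α)))
include hα hℓ hratio

lemma eventually_lt_apply_mul_quantile {c : ℝ} (hc : ℓ < c) :
    ∀ᶠ τ in 𝓝[>] 0, τ < G (c * quantile F τ) := by
  have hc0 : 0 < c := hℓ.trans hc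
  have hlt : ∀ᶠ z in 𝓝[>] 0, F z < G (c * z) := by
    filter_upwards [(hratio c hc0).eventually
      (lt_mem_nhds (one_lt_rpow ((one_lt_div hℓ).2 hc) hα)), self_mem_nhdsWithin] with z hz hz0
    exact (one_lt_div (hFpos z hz0)).1 hz
  filter_upwards [eventually_le_apply_quantile hmono hrc hF0 hFpos,
    (tendsto_quantile_nhdsGT_zero hmono hrc hF0 hFpos).eventually hlt] with τ hle hlt
  exact hle.trans_lt hlt

include hG0 in
lemma eventually_mul_quantile_le {c : ℝ} (hc0 : 0 < c) (hc : c < ℓ) :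
    ∀ᶠ τ in 𝓝[>] 0, ∀ s, τ < G s → c * quantile F τ ≤ s := by
  have hlt : ∀ᶠ z in 𝓝[>] 0, G (c * z) < F z := by
    filter_upwards [(hratio c hc0).eventually
      (gt_mem_nhds (rpow_lt_one (div_pos hc0 hℓ).le ((div_lt_one hℓ).2 hc) hα)),
      self_mem_nhdsWithin] with z hz hz0
    exact (div_lt_one (hFpos z hz0)).1 hz
  obtain ⟨u, hu, hsub⟩ := mem_nhdsGT_iff_exists_Ioo_subset.1 hlt
  filter_upwards [self_mem_nhdsWithin,
    (tendsto_quantile_nhdsGT_zero hmono hrc hF0 hFpos).eventually (Ioo_mem_nhdsGT hu)]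
    with τ hτ hQ s hs
  by_contra! hsQ
  have hs0 : 0 < s := lt_of_not_ge fun h => (hG0 s h).not_gt (hτ.trans hs)
  have hsc : s / c < quantile F τ := (div_lt_iff₀' hc0).2 hsQ
  have hGs : G (c * (s / c)) < F (s / c) := hsub ⟨div_pos hs0 hc0, hsc.trans hQ.2⟩
  rw [mul_div_cancel₀ s hc0.ne'] at hGs
  exact (hGs.trans_le (apply_le_of_lt_quantile (bddBelow_setOf_lt_apply hF0 hτ.le) hsc)).not_gt hs

include hG0 in
lemma tendsto_quantile_div_quantile :
    Tendsto (fun τ => quantile G τ / quantile F τ) (𝓝[>] 0) (𝓝 ℓ) := by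
  have hmem (c : ℝ) (hc : ℓ < c) : ∀ᶠ τ in 𝓝[>] 0, c * quantile F τ ∈ {z | τ < G z} :=
    eventually_lt_apply_mul_quantile hmono hrc hF0 hFpos hα hℓ hratio hc
  refine tendsto_div_of_forall_eventually_mul_le hℓ
    ((tendsto_quantile_nhdsGT_zero hmono hrc hF0 hFpos).eventually self_mem_nhdsWithin)
    (fun c hc0 hc => ?_) (fun c hc => ?_)
  · filter_upwards [hmem (ℓ + 1) (lt_add_one ℓ),
      eventually_mul_quantile_le hmono hrc hF0 hFpos hα hℓ hG0 hratio hc0 hc] with τ hne hle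
    exact le_csInf ⟨_, hne⟩ hle
  · filter_upwards [self_mem_nhdsWithin, hmem c hc] with τ hτ hmemτ
    exact csInf_le (bddBelow_setOf_lt_apply hG0 (le_of_lt hτ)) hmemτ

end Quantile

lemma quantile_div_const (F : ℝ → ℝ) {m : ℝ} (hm : 0 < m) (τ : ℝ) :
    quantile (fun z => F z / m) τ = quantile F (m * τ) := by
  simp only [quantile, lt_div_iff₀' hm]

section RegularVariation

variable {ξ : ℝ} {F G : ℝ → ℝ} (hξ : ξ < 0) (hmono : Monotone F)
  (hrc : ∀ z, ContinuousWithinAt F (Ici z) z) (hF0 : ∀ z ≤ 0, F z ≤ 0) (hFpos : ∀ z > 0, 0 < F z)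
  (hreg : ∀ v > 0, Tendsto (fun z => F (v * z) / F z) (𝓝[>] 0) (𝓝 (v ^ (-1 / ξ))))
include hξ hFpos hreg

lemma tendsto_apply_mul_div_of_tendsto_div {L : ℝ} (hL : 0 < L)
    (hGF : Tendsto (fun z => G z / F z) (𝓝[>] 0) (𝓝 L)) {c : ℝ} (hc : 0 < c) :
    Tendsto (fun z => G (c * z) / F z) (𝓝[>] 0) (𝓝 ((c / L ^ ξ) ^ (-1 / ξ))) := by
  rw [← mul_rpow_neg_one_div hL hc.le hξ.ne]
  refine ((hGF.comp (tendsto_const_mul_nhdsGT_zero hc)).mul (hreg c hc)).congr' ?_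
  filter_upwards [self_mem_nhdsWithin] with z hz
  simp only [Function.comp_apply]
  exact div_mul_div_cancel₀ (hFpos _ (mul_pos hc hz)).ne'

include hmono hrc hF0 in
lemma tendsto_quantile_div_quantile_of_tendsto_div (hG0 : ∀ z ≤ 0, G z ≤ 0) {L : ℝ} (hL : 0 < L)
    (hGF : Tendsto (fun z => G z / F z) (𝓝[>] 0) (𝓝 L)) :
    Tendsto (fun τ => quantile G τ / quantile F τ) (𝓝[>] 0) (𝓝 (L ^ ξ)) :=
  tendsto_quantile_div_quantile hmono hrc hF0 hFpos (div_pos_of_neg_of_neg neg_one_lt_zero hξ)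
    (rpow_pos_of_pos hL ξ) hG0
    fun _ hc => tendsto_apply_mul_div_of_tendsto_div hξ hFpos hreg hL hGF hc

end RegularVariation

theorem extremal_qr_step912_type3_general
    (ξ : ℝ) (hξ : ξ < 0)
    (F₁ F₂ : ℝ → ℝ)
    (h₁mono : Monotone F₁) (h₂mono : Monotone F₂)
    (h₁rc : ∀ z : ℝ, ContinuousWithinAt F₁ (Set.Ici z) z)
    (h₁pos : ∀ z > (0:ℝ), 0 < F₁ z)
    (hreg : ∀ v > (0:ℝ), Tendsto (fun z => F₁ (v * z) / F₁ z) (𝓝[>] (0:ℝ)) (𝓝 (v ^ (-1/ξ))))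
    (K : ℝ) (hK : 0 < K)
    (heq : Tendsto (fun z => F₂ z / F₁ z) (𝓝[>] (0:ℝ)) (𝓝 K))
    (m : ℝ) (hm : m ∈ Set.Ioo (0:ℝ) 1 ∪ Set.Ioi 1)
    :
    Tendsto (fun τ => (sInf {z | τ < F₂ z} - sInf {z | τ < F₁ z}) /
        (sInf {z | m * τ < F₁ z} - sInf {z | τ < F₁ z})) (𝓝[>] (0:ℝ))
      (𝓝 ((K ^ ξ - 1) / (m ^ (-ξ) - 1))) ∧
    ∀ᶠ τ in 𝓝[>] (0:ℝ), sInf {z | m * τ < F₁ z} - sInf {z | τ < F₁ z} ≠ 0 := by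
  have hm0 : 0 < m := hm.elim (·.1) (one_pos.trans ·)
  have hF₁lim : Tendsto F₁ (𝓝[>] 0) (𝓝 0) :=
    tendsto_nhdsGT_zero_of_tendsto_div h₁mono (fun z hz => (h₁pos z hz).le) two_pos
      (one_lt_rpow one_lt_two (div_pos_of_neg_of_neg neg_one_lt_zero hξ)).ne' (hreg 2 two_pos)
  have hF₂lim : Tendsto F₂ (𝓝[>] 0) (𝓝 0) := by
    refine (mul_zero K ▸ heq.mul hF₁lim).congr' ?_
    filter_upwards [self_mem_nhdsWithin] with z hz
    exact div_mul_cancel₀ _ (h₁pos z hz).ne'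
  have hF₁0 := h₁mono.nonpos_of_tendsto_nhdsGT_zero hF₁lim
  have hK' : Tendsto (fun τ => quantile F₂ τ / quantile F₁ τ) (𝓝[>] 0) (𝓝 (K ^ ξ)) :=
    tendsto_quantile_div_quantile_of_tendsto_div hξ h₁mono h₁rc hF₁0 h₁pos hreg
      (h₂mono.nonpos_of_tendsto_nhdsGT_zero hF₂lim) hK heq
  have hm' : Tendsto (fun τ => quantile F₁ (m * τ) / quantile F₁ τ) (𝓝[>] 0) (𝓝 (m ^ (-ξ))) := by
    have hdiv : Tendsto (fun z => F₁ z / m / F₁ z) (𝓝[>] 0) (𝓝 m⁻¹) :=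
      tendsto_const_nhds.congr' <| by
        filter_upwards [self_mem_nhdsWithin] with z hz
        rw [div_div_cancel_left' (h₁pos z hz).ne']
    simpa only [quantile_div_const F₁ hm0, inv_rpow hm0.le, ← rpow_neg hm0.le] using
      tendsto_quantile_div_quantile_of_tendsto_div hξ h₁mono h₁rc hF₁0 h₁pos hreg
        (fun z hz => div_nonpos_of_nonpos_of_nonneg (hF₁0 z hz) hm0.le) (inv_pos.2 hm0) hdiv
  have hm1 : m ^ (-ξ) ≠ 1 := by
    rcases hm with hm | hm
    · exact (rpow_lt_one hm0.le hm.2 (neg_pos.2 hξ)).ne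
    · exact (one_lt_rpow hm (neg_pos.2 hξ)).ne'
  exact tendsto_sub_div_sub_of_tendsto_div
    (((tendsto_quantile_nhdsGT_zero h₁mono h₁rc hF₁0 h₁pos).eventually
      self_mem_nhdsWithin).mono fun _ h => (mem_Ioi.1 h).ne') hK' hm' hm1

theorem extremal_qr_step912_type3
    (ξ : ℝ) (hξ : ξ < 0)
    (F₁ F₂ : ℝ → ℝ)
    (h₁mono : Monotone F₁) (h₂mono : Monotone F₂)
    (h₁rc : ∀ z : ℝ, ContinuousWithinAt F₁ (Set.Ici z) z)
    (h₂rc : ∀ z : ℝ, ContinuousWithinAt F₂ (Set.Ici z) z)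
    (h₁range : ∀ z : ℝ, F₁ z ∈ Set.Icc (0:ℝ) 1)
    (h₂range : ∀ z : ℝ, F₂ z ∈ Set.Icc (0:ℝ) 1)
    (h₁0 : ∀ z < (0:ℝ), F₁ z = 0) (h₁pos : ∀ z > (0:ℝ), 0 < F₁ z)
    (h₂0 : ∀ z < (0:ℝ), F₂ z = 0) (h₂pos : ∀ z > (0:ℝ), 0 < F₂ z)
    (hreg : ∀ v > (0:ℝ), Tendsto (fun z => F₁ (v * z) / F₁ z) (𝓝[>] (0:ℝ)) (𝓝 (v ^ (-1/ξ))))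
    (K : ℝ) (hK : 0 < K)
    (heq : Tendsto (fun z => F₂ z / F₁ z) (𝓝[>] (0:ℝ)) (𝓝 K))
    (m : ℝ) (hm : m ∈ Set.Ioo (0:ℝ) 1 ∪ Set.Ioi 1)
    :
    Tendsto (fun τ => (sInf {z | τ < F₂ z} - sInf {z | τ < F₁ z}) /
        (sInf {z | m * τ < F₁ z} - sInf {z | τ < F₁ z})) (𝓝[>] (0:ℝ))
      (𝓝 ((K ^ ξ - 1) / (m ^ (-ξ) - 1))) ∧
    ∀ᶠ τ in 𝓝[>] (0:ℝ), sInf {z | m * τ < F₁ z} - sInf {z | τ < F₁ z} ≠ 0 :=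
  extremal_qr_step912_type3_general ξ hξ F₁ F₂ h₁mono h₂mono h₁rc h₁pos hreg K hK heq m hm
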